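/- For fixed angles a, b ∈ ℝ, the function g(x,y) = Re(−i·Log((e^{ia} − (x+iy))/(e^{ib} − (x+iy)))) has gradient at the origin equal to (sin a − sin b, cos b − cos a). -/

import Mathlib

/-!
Write `g = Im (L ∘ F)` with `F z = (e^{ia} - z) / (e^{ib} - z)`. Differentiating `exp ∘ L = id`
near `F 0 = e^{ia} / e^{ib}` gives `L' (F 0) = e^{ib} / e^{ia}`, and `F' 0 = (e^{ia} - e^{ib}) / e^{2ib}`,
so `(L ∘ F)' 0 = e^{-ib} - e^{-ia}`. For a holomorphic `h` with `h' z = c`, the real derivative of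
`Im h` at `z` in the direction `v` is `Im (v c)`; take `v = 1` and `v = i`.
-/

open Complex Real Topology

theorem hasDerivAt_inv_of_cexp_eventuallyEq {L : ℂ → ℂ} {w : ℂ} (hL : DifferentiableAt ℂ L w)
    (hexp : ∀ᶠ z in 𝓝 w, cexp (L z) = z) : HasDerivAt L w⁻¹ w := by
  have hw : cexp (L w) = w := hexp.self_of_nhds
  have hid : HasDerivAt id (w * deriv L w) w := by
    have h := hL.hasDerivAt.cexp
    rw [hw] at h
    exact h.congr_of_eventuallyEq (hexp.mono fun z hz => hz.symm)
  rw [← eq_inv_of_mul_eq_one_right (hid.unique (hasDerivAt_id w))]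
  exact hL.hasDerivAt

theorem hasDerivAt_sub_div_sub {α β z : ℂ} (hz : β - z ≠ 0) :
    HasDerivAt (fun z => (α - z) / (β - z)) ((α - β) / (β - z) ^ 2) z :=
  (((hasDerivAt_id z).const_sub α).div ((hasDerivAt_id z).const_sub β) hz).congr_deriv
    (by simp only [id]; ring)

theorem HasDerivAt.fderiv_im_apply {h : ℂ → ℂ} {c z : ℂ} (hh : HasDerivAt h c z) (v : ℂ) :
    fderiv ℝ (fun z => (h z).im) z v = (v * c).im := by
  have him : HasFDerivAt (fun z => (h z).im) _ z :=
    imCLM.hasFDerivAt.comp z (hh.hasFDerivAt.restrictScalars ℝ)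
  rw [him.fderiv]
  simp

theorem inv_exp_ofReal_mul_I (θ : ℝ) : (cexp (θ * I))⁻¹ = Real.cos θ - Real.sin θ * I := by
  rw [← Complex.exp_neg, ← neg_mul, ← ofReal_neg, exp_mul_I, ← ofReal_cos, ← ofReal_sin,
    Real.cos_neg, Real.sin_neg, ofReal_neg]
  ring

theorem gradient_of_arg_difference (a b : ℝ) (L : ℂ → ℂ)
    (hL : DifferentiableAt ℂ L (Complex.exp (a * Complex.I) / Complex.exp (b * Complex.I)))
    (hbranch : ∀ᶠ z in nhds (Complex.exp (a * Complex.I) / Complex.exp (b * Complex.I)),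
      Complex.exp (L z) = z)
    (g : ℂ → ℝ)
    (hg : ∀ z : ℂ, g z =
      (-Complex.I * L ((Complex.exp (a * Complex.I) - z) /
        (Complex.exp (b * Complex.I) - z))).re) :
    fderiv ℝ g (0 : ℂ) 1 = Real.sin a - Real.sin b ∧
    fderiv ℝ g (0 : ℂ) Complex.I = Real.cos b - Real.cos a := by
  set ea := cexp (a * I)
  set eb := cexp (b * I)
  have hea : ea ≠ 0 := Complex.exp_ne_zero _
  have heb : eb ≠ 0 := Complex.exp_ne_zero _
  have hderiv : HasDerivAt (fun z => L ((ea - z) / (eb - z))) (eb⁻¹ - ea⁻¹) 0 := by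
    have hF := hasDerivAt_sub_div_sub (α := ea) (z := 0) (by rwa [sub_zero])
    refine ((hasDerivAt_inv_of_cexp_eventuallyEq hL hbranch).comp_of_eq 0 hF
      (by rw [sub_zero, sub_zero])).congr_deriv ?_
    field_simp
    ring
  have hg_im : g = fun z => (L ((ea - z) / (eb - z))).im := funext fun z => by simp [hg]
  rw [hg_im, hderiv.fderiv_im_apply, hderiv.fderiv_im_apply, inv_exp_ofReal_mul_I,
    inv_exp_ofReal_mul_I]
  constructor
  · simp [Complex.sin_ofReal_re]
    ring
  · simp [Complex.cos_ofReal_re]
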